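/- For all positive integers n, the determinant of the n×n Hankel matrix whose (i,j) entry is the Motzkin prefix number MP_{i+j+1} equals (-1)^{floor(n/3)} if n ≡ 0 or 2 (mod 3), and 2·(-1)^{floor(n/3)} if n ≡ 1 (mod 3). -/
import Mathlib

set_option maxHeartbeats 1000000

/- The Motzkin prefix number `MP n`: the number of lattice paths of `n` steps, each step
being `(1,1)`, `(1,0)` or `(1,-1)`, starting at the origin and never going below the
x-axis (arbitrary endpoint). -/
open scoped Classical in
noncomputable def motzkinPrefix (n : ℕ) : ℕ :=
  (Finset.univ.filter (fun f : Fin n → Fin 3 =>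
    ∀ m : ℕ, m ≤ n →
      0 ≤ ∑ i ∈ Finset.univ.filter (fun i : Fin n => (i : ℕ) < m),
        (1 - ((f i : ℕ) : ℤ)))).card

def pcount : ℕ → ℕ → ℕ → ℕ
  | 0, k, l => if k = l then 1 else 0
  | m+1, 0, l => pcount m 0 l + pcount m 1 l
  | m+1, k+1, l => pcount m k l + pcount m (k+1) l + pcount m (k+2) l

lemma pc0 (k l : ℕ) : pcount 0 k l = if k = l then 1 else 0 := rfl
lemma pcS0 (m l : ℕ) : pcount (m+1) 0 l = pcount m 0 l + pcount m 1 l := rfl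
lemma pcSS (m k l : ℕ) : pcount (m+1) (k+1) l
    = pcount m k l + pcount m (k+1) l + pcount m (k+2) l := rfl

lemma pcount_eq_zero (m : ℕ) : ∀ k l, k + m < l → pcount m k l = 0 := by
  induction m with
  | zero => intro k l h; rw [pc0]; split_ifs with hh <;> omega
  | succ m ih =>
    intro k l h
    match k with
    | 0 => rw [pcS0, ih 0 l (by omega), ih 1 l (by omega)]
    | k+1 => rw [pcSS, ih k l (by omega), ih (k+1) l (by omega), ih (k+2) l (by omega)]

lemma pcount_succ_right (m : ℕ) : ∀ k, (pcount (m+1) k 0 = pcount m k 0 + pcount m k 1) ∧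
    ∀ l, pcount (m+1) k (l+1) = pcount m k l + pcount m k (l+1) + pcount m k (l+2) := by
  induction m with
  | zero =>
    intro k
    constructor
    · match k with
      | 0 => simp [pcS0, pc0]
      | k+1 => simp only [pcSS, pc0]; split_ifs <;> first | contradiction | omega
    · intro l
      match k with
      | 0 => simp only [pcS0, pc0]; split_ifs <;> first | contradiction | omega
      | k+1 => simp only [pcSS, pc0]; split_ifs <;> first | contradiction | omega
  | succ m ih =>
    intro k
    constructor
    · match k with
      | 0 =>
        conv_lhs => rw [pcS0, (ih 0).1, (ih 1).1]
        conv_rhs => rw [pcS0, pcS0]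
        ring
      | k+1 =>
        conv_lhs => rw [pcSS, (ih k).1, (ih (k+1)).1, (ih (k+2)).1]
        conv_rhs => rw [pcSS, pcSS]
        ring
    · intro l
      match k with
      | 0 =>
        conv_lhs => rw [pcS0, (ih 0).2 l, (ih 1).2 l]
        conv_rhs => rw [pcS0, pcS0, pcS0]
        ring
      | k+1 =>
        conv_lhs => rw [pcSS, (ih k).2 l, (ih (k+1)).2 l, (ih (k+2)).2 l]
        conv_rhs => rw [pcSS, pcSS, pcSS]
        ring

lemma pcount_diag (m : ℕ) : ∀ k, pcount m k (k + m) = 1 := by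
  induction m with
  | zero => intro k; simp [pc0]
  | succ m ih =>
    intro k
    match k with
    | 0 => rw [pcS0, pcount_eq_zero m 0 (0 + (m+1)) (by omega)]
           have := ih 1; rw [show (1 + m) = 0 + (m+1) by omega] at this; omega
    | k+1 => rw [pcSS, pcount_eq_zero m k (k+1+(m+1)) (by omega),
                 pcount_eq_zero m (k+1) (k+1+(m+1)) (by omega)]
             have := ih (k+2); rw [show (k+2+m) = k+1+(m+1) by omega] at this; omega

open Finset
open scoped Classical

noncomputable def sfil (m : ℕ) (f : Fin m → Fin 3) (p : ℕ) : ℤ :=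
  ∑ i ∈ Finset.univ.filter (fun i : Fin m => (i : ℕ) < p), (1 - ((f i : ℕ) : ℤ))

def cntP (m k l : ℕ) (f : Fin m → Fin 3) : Prop :=
  (∀ p ≤ m, 0 ≤ (k:ℤ) + sfil m f p) ∧
    (k:ℤ) + ∑ i : Fin m, (1 - ((f i : ℕ) : ℤ)) = (l:ℤ)

noncomputable def cnt (m k l : ℕ) : ℕ := Nat.card {f : Fin m → Fin 3 // cntP m k l f}

lemma sfil_zero (m : ℕ) (f : Fin m → Fin 3) : sfil m f 0 = 0 := by
  rw [sfil]
  convert Finset.sum_empty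
  simp

lemma sfil_cons (m : ℕ) (s : Fin 3) (g : Fin m → Fin 3) (p : ℕ) :
    sfil (m+1) (Fin.cons s g) (p+1) = (1 - ((s : ℕ) : ℤ)) + sfil m g p := by
  rw [sfil, sfil, Finset.sum_filter, Finset.sum_filter, Fin.sum_univ_succ]
  simp only [Fin.cons_zero, Fin.cons_succ, Fin.val_succ, Fin.val_zero]
  rw [if_pos (by omega : (0:ℕ) < p + 1)]
  congr 1
  refine Finset.sum_congr rfl fun i _ => ?_
  congr 1
  simp [Nat.succ_lt_succ_iff]

lemma tot_cons (m : ℕ) (s : Fin 3) (g : Fin m → Fin 3) :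
    ∑ i : Fin (m+1), (1 - (((Fin.cons s g : Fin (m+1) → Fin 3) i : Fin 3) : ℕ) : ℤ)
      = (1 - ((s : ℕ) : ℤ)) + ∑ i : Fin m, (1 - ((g i : ℕ) : ℤ)) := by
  rw [Fin.sum_univ_succ]
  simp

lemma sfil_top (m : ℕ) (f : Fin m → Fin 3) :
    sfil m f m = ∑ i : Fin m, (1 - ((f i : ℕ) : ℤ)) := by
  rw [sfil]
  rw [Finset.filter_true_of_mem (fun i _ => i.isLt)]

/-- condition transfer along `Fin.cons` -/
lemma cond_cons (m k l : ℕ) (s : Fin 3) (g : Fin m → Fin 3) :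
    cntP (m+1) k l (Fin.cons s g)
    ↔ ((∀ p ≤ m, 0 ≤ ((k:ℤ) + (1 - ((s:ℕ):ℤ))) + sfil m g p) ∧
      ((k:ℤ) + (1 - ((s:ℕ):ℤ))) + ∑ i : Fin m, (1 - ((g i : ℕ) : ℤ)) = (l:ℤ)) := by
  rw [cntP, tot_cons]
  constructor
  · rintro ⟨h1, h2⟩
    refine ⟨fun p hp => ?_, by linarith⟩
    have := h1 (p+1) (by omega)
    rw [sfil_cons] at this
    linarith
  · rintro ⟨h1, h2⟩
    refine ⟨fun p hp => ?_, by linarith⟩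
    match p with
    | 0 => rw [sfil_zero]; positivity
    | p+1 =>
      rw [sfil_cons]
      have := h1 p (by omega)
      linarith

lemma natCard_split (m : ℕ) (P : (Fin (m+1) → Fin 3) → Prop) :
    Nat.card {f : Fin (m+1) → Fin 3 // P f}
      = Nat.card {g : Fin m → Fin 3 // P (Fin.cons 0 g)}
      + Nat.card {g : Fin m → Fin 3 // P (Fin.cons 1 g)}
      + Nat.card {g : Fin m → Fin 3 // P (Fin.cons 2 g)} := by
  have e : {f : Fin (m+1) → Fin 3 // P f}
      ≃ Σ s : Fin 3, {g : Fin m → Fin 3 // P (Fin.cons s g)} :=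
    (Equiv.subtypeEquiv (Fin.consEquiv fun _ => Fin 3).symm (fun f => by
      simp only [Fin.consEquiv_symm_apply]
      rw [Fin.cons_self_tail])).trans
      (Equiv.subtypeProdEquivSigmaSubtype fun s g => P (Fin.cons s g))
  rw [Nat.card_congr e, Nat.card_eq_fintype_card, Fintype.card_sigma, Fin.sum_univ_three,
    Nat.card_eq_fintype_card, Nat.card_eq_fintype_card, Nat.card_eq_fintype_card]

lemma cnt_succ_zero (m l : ℕ) : cnt (m+1) 0 l = cnt m 0 l + cnt m 1 l := by
  rw [cnt, natCard_split m (cntP (m+1) 0 l)]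
  have e0 : Nat.card {g : Fin m → Fin 3 // cntP (m+1) 0 l (Fin.cons 0 g)} = cnt m 1 l := by
    rw [cnt]
    refine Nat.card_congr (Equiv.subtypeEquivRight fun g => ?_)
    rw [cond_cons, cntP, show (((0: Fin 3):ℕ):ℤ) = 0 from rfl]
    constructor <;> rintro ⟨h1, h2⟩ <;>
      exact ⟨fun p hp => by have := h1 p hp; push_cast at *; linarith,
        by push_cast at *; linarith⟩
  have e1 : Nat.card {g : Fin m → Fin 3 // cntP (m+1) 0 l (Fin.cons 1 g)} = cnt m 0 l := by
    rw [cnt]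
    refine Nat.card_congr (Equiv.subtypeEquivRight fun g => ?_)
    rw [cond_cons, cntP, show (((1: Fin 3):ℕ):ℤ) = 1 from rfl]
    constructor <;> rintro ⟨h1, h2⟩ <;>
      exact ⟨fun p hp => by have := h1 p hp; push_cast at *; linarith,
        by push_cast at *; linarith⟩
  have e2 : Nat.card {g : Fin m → Fin 3 // cntP (m+1) 0 l (Fin.cons 2 g)} = 0 := by
    rw [Nat.card_eq_zero]
    left
    refine ⟨fun ⟨g, hg⟩ => ?_⟩
    rw [cond_cons, show (((2: Fin 3):ℕ):ℤ) = 2 from rfl] at hg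
    have := hg.1 0 (by omega)
    rw [sfil_zero] at this
    norm_num at this
  rw [e0, e1, e2]
  omega

lemma cnt_succ_succ (m k l : ℕ) :
    cnt (m+1) (k+1) l = cnt m k l + cnt m (k+1) l + cnt m (k+2) l := by
  rw [cnt, natCard_split m (cntP (m+1) (k+1) l)]
  have e0 : Nat.card {g : Fin m → Fin 3 // cntP (m+1) (k+1) l (Fin.cons 0 g)}
      = cnt m (k+2) l := by
    rw [cnt]
    refine Nat.card_congr (Equiv.subtypeEquivRight fun g => ?_)
    rw [cond_cons, cntP, show (((0: Fin 3):ℕ):ℤ) = 0 from rfl]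
    constructor <;> rintro ⟨h1, h2⟩ <;>
      exact ⟨fun p hp => by have := h1 p hp; push_cast at *; linarith,
        by push_cast at *; linarith⟩
  have e1 : Nat.card {g : Fin m → Fin 3 // cntP (m+1) (k+1) l (Fin.cons 1 g)}
      = cnt m (k+1) l := by
    rw [cnt]
    refine Nat.card_congr (Equiv.subtypeEquivRight fun g => ?_)
    rw [cond_cons, cntP, show (((1: Fin 3):ℕ):ℤ) = 1 from rfl]
    constructor <;> rintro ⟨h1, h2⟩ <;>
      exact ⟨fun p hp => by have := h1 p hp; push_cast at *; linarith,
        by push_cast at *; linarith⟩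
  have e2 : Nat.card {g : Fin m → Fin 3 // cntP (m+1) (k+1) l (Fin.cons 2 g)}
      = cnt m k l := by
    rw [cnt]
    refine Nat.card_congr (Equiv.subtypeEquivRight fun g => ?_)
    rw [cond_cons, cntP, show (((2: Fin 3):ℕ):ℤ) = 2 from rfl]
    constructor <;> rintro ⟨h1, h2⟩ <;>
      exact ⟨fun p hp => by have := h1 p hp; push_cast at *; linarith,
        by push_cast at *; linarith⟩
  rw [e0, e1, e2]
  omega

lemma cnt_eq_pcount (m : ℕ) : ∀ k l, cnt m k l = pcount m k l := by
  induction m with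
  | zero =>
    intro k l
    rw [cnt, show pcount 0 k l = if k = l then 1 else 0 from rfl]
    have : ∀ f : Fin 0 → Fin 3, cntP 0 k l f ↔ k = l := by
      intro f
      rw [cntP]
      simp only [Nat.le_zero]
      constructor
      · rintro ⟨-, h2⟩
        simp only [Finset.univ_eq_empty, Finset.sum_empty, add_zero] at h2
        exact_mod_cast h2
      · rintro rfl
        refine ⟨fun p hp => ?_, by simp⟩
        subst hp
        rw [sfil_zero]
        positivity
    split_ifs with h
    · rw [Nat.card_congr (Equiv.subtypeEquivRight fun g => by rw [this g, iff_true_intro h])]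
      simp [Nat.card_eq_fintype_card]
    · rw [Nat.card_eq_zero]
      left
      exact ⟨fun ⟨g, hg⟩ => h ((this g).1 hg)⟩
  | succ m ih =>
    intro k l
    match k with
    | 0 => rw [cnt_succ_zero, ih 0 l, ih 1 l]; rfl
    | k+1 => rw [cnt_succ_succ, ih k l, ih (k+1) l, ih (k+2) l]; rfl

lemma card_filter_eq_natCard {α : Type*} [Fintype α] (p : α → Prop) [DecidablePred p] :
    (Finset.univ.filter p).card = Nat.card {x // p x} := by
  rw [Nat.card_eq_fintype_card, Fintype.card_subtype]

lemma motzkinPrefix_eq_sum (m : ℕ) :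
    motzkinPrefix m = ∑ l ∈ Finset.range (m+1), cnt m 0 l := by
  rw [motzkinPrefix]
  have hQ : ∀ f : Fin m → Fin 3, (∀ m' ≤ m, 0 ≤ ∑ i ∈ Finset.univ.filter
        (fun i : Fin m => (i : ℕ) < m'), (1 - ((f i : ℕ) : ℤ)))
      → (∑ i : Fin m, (1 - ((f i : ℕ) : ℤ))).toNat ∈ Finset.range (m+1) := by
    intro f hf
    have h1 : ∑ i : Fin m, (1 - ((f i : ℕ) : ℤ)) ≤ m := by
      calc ∑ i : Fin m, (1 - ((f i : ℕ) : ℤ)) ≤ ∑ _i : Fin m, (1:ℤ) := by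
            refine Finset.sum_le_sum fun i _ => by omega
        _ = m := by simp
    simp only [Finset.mem_range]
    omega
  rw [Finset.card_eq_sum_card_fiberwise (f := fun f : Fin m → Fin 3 =>
    (∑ i : Fin m, (1 - ((f i : ℕ) : ℤ))).toNat) (t := Finset.range (m+1))
    (fun f hf => hQ f (by simpa using (Finset.mem_filter.1 hf).2))]
  refine Finset.sum_congr rfl fun l _ => ?_
  rw [Finset.filter_filter]
  rw [card_filter_eq_natCard]
  rw [cnt]
  refine Nat.card_congr (Equiv.subtypeEquivRight fun f => ?_)
  rw [cntP]
  constructor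
  · rintro ⟨h1, h2⟩
    have htot : 0 ≤ ∑ i : Fin m, (1 - ((f i : ℕ) : ℤ)) := by
      have := h1 m le_rfl
      rwa [← sfil_top]
    refine ⟨fun p hp => by have := h1 p hp; rw [sfil]; push_cast; linarith, by push_cast; omega⟩
  · rintro ⟨h1, h2⟩
    have htot : 0 ≤ ∑ i : Fin m, (1 - ((f i : ℕ) : ℤ)) := by
      have := h1 m le_rfl
      rw [sfil_top] at this
      push_cast at this
      linarith
    refine ⟨fun p hp => by have := h1 p hp; rw [sfil] at this; push_cast at this; linarith,
      by push_cast at h2; omega⟩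

noncomputable def Aw (m k : ℕ) : ℤ := ∑ i ∈ Finset.range (m+1), (pcount m 0 (k+i) : ℤ)

lemma Aw_eq_zero {m k : ℕ} (h : m < k) : Aw m k = 0 := by
  rw [Aw]
  exact Finset.sum_eq_zero fun i _ => by
    rw [pcount_eq_zero m 0 (k+i) (by omega)]; rfl

lemma Aw_diag (m : ℕ) : Aw m m = 1 := by
  rcases m with _ | m
  · simp [Aw, pc0]
  · rw [Aw, Finset.sum_range_succ' _ (m+1)]
    rw [Finset.sum_eq_zero fun i _ => by
      rw [pcount_eq_zero (m+1) 0 (m+1+(i+1)) (by omega)]; rfl]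
    have := pcount_diag (m+1) 0
    simp only [Nat.zero_add] at this
    simp [this]

lemma Aw_step (m k : ℕ) : Aw m (k+1) = Aw m k - (pcount m 0 k : ℤ) := by
  have h1 : Aw m k = ∑ i ∈ Finset.range m, (pcount m 0 (k+(i+1)) : ℤ) + (pcount m 0 (k+0) : ℤ) :=
    Finset.sum_range_succ' _ m
  have h2 : Aw m (k+1) = ∑ i ∈ Finset.range m, (pcount m 0 (k+1+i) : ℤ) + (pcount m 0 (k+1+m) : ℤ) :=
    Finset.sum_range_succ _ m
  have e : ∀ i : ℕ, k+1+i = k+(i+1) := fun i => by omega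
  simp only [e] at h2
  simp only [Nat.add_zero] at h1
  rw [h1, h2, pcount_eq_zero m 0 (k+(m+1)) (by omega)]
  push_cast
  ring

lemma Aw_recS (m k : ℕ) : Aw (m+1) (k+1) = Aw m k + Aw m (k+1) + Aw m (k+2) := by
  have expand : Aw (m+1) (k+1) = ∑ i ∈ Finset.range (m+2),
      ((pcount m 0 (k+i) : ℤ) + pcount m 0 (k+i+1) + pcount m 0 (k+i+2)) := by
    rw [Aw]
    refine Finset.sum_congr rfl fun i _ => ?_
    rw [show k+1+i = (k+i)+1 by omega, (pcount_succ_right m 0).2 (k+i)]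
    push_cast; ring
  rw [expand, Finset.sum_add_distrib, Finset.sum_add_distrib]
  have e1 : ∑ i ∈ Finset.range (m+2), (pcount m 0 (k+i) : ℤ) = Aw m k := by
    rw [Aw, Finset.sum_range_succ, pcount_eq_zero m 0 (k+(m+1)) (by omega)]
    simp
  have e2 : ∑ i ∈ Finset.range (m+2), (pcount m 0 (k+i+1) : ℤ) = Aw m (k+1) := by
    rw [Aw, Finset.sum_range_succ,
      Finset.sum_congr rfl (fun i (_ : i ∈ Finset.range (m+1)) => by
        rw [show k+i+1 = k+1+i by omega]),
      pcount_eq_zero m 0 (k+(m+1)+1) (by omega)]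
    simp
  have e3 : ∑ i ∈ Finset.range (m+2), (pcount m 0 (k+i+2) : ℤ) = Aw m (k+2) := by
    rw [Aw, Finset.sum_range_succ,
      Finset.sum_congr rfl (fun i (_ : i ∈ Finset.range (m+1)) => by
        rw [show k+i+2 = k+2+i by omega]),
      pcount_eq_zero m 0 (k+(m+1)+2) (by omega)]
    simp
  rw [e1, e2, e3]

lemma Aw_rec0 (m : ℕ) : Aw (m+1) 0 = 2 * Aw m 0 + Aw m 1 := by
  have expand : Aw (m+1) 0 = (pcount (m+1) 0 0 : ℤ) + ∑ i ∈ Finset.range (m+1),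
      ((pcount m 0 i : ℤ) + pcount m 0 (i+1) + pcount m 0 (i+2)) := by
    rw [Aw]
    rw [Finset.sum_range_succ' (fun i => (pcount (m+1) 0 (0+i) : ℤ)) (m+1)]
    simp only [Nat.zero_add]
    rw [add_comm]
    congr 1
    refine Finset.sum_congr rfl fun i _ => ?_
    rw [(pcount_succ_right m 0).2 i]
    push_cast; ring
  rw [expand, Finset.sum_add_distrib, Finset.sum_add_distrib]
  have e1 : ∑ i ∈ Finset.range (m+1), (pcount m 0 i : ℤ) = Aw m 0 := by
    rw [Aw]; exact Finset.sum_congr rfl fun i _ => by rw [Nat.zero_add]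
  have e2 : ∑ i ∈ Finset.range (m+1), (pcount m 0 (i+1) : ℤ) = Aw m 1 := by
    rw [Aw]; exact Finset.sum_congr rfl fun i _ => by rw [show (1:ℕ)+i = i+1 by omega]
  have e3 : ∑ i ∈ Finset.range (m+1), (pcount m 0 (i+2) : ℤ) = Aw m 2 := by
    rw [Aw]; exact Finset.sum_congr rfl fun i _ => by rw [show (2:ℕ)+i = i+2 by omega]
  rw [e1, e2, e3, (pcount_succ_right m 0).1]
  have h01 := Aw_step m 0
  have h12 := Aw_step m 1
  norm_num at h01 h12
  push_cast
  linarith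

lemma Aw_inner_shift (N i m : ℕ) (hi : i + 2 ≤ N) :
    ∑ k ∈ Finset.range N, Aw (i+1) k * Aw m k
      = ∑ k ∈ Finset.range N, Aw i k * Aw (m+1) k := by
  have key : ∀ k, Aw (i+1) k * Aw m k - Aw i k * Aw (m+1) k
      = (fun k => match k with
          | 0 => (0:ℤ)
          | k+1 => Aw i k * Aw m (k+1) - Aw i (k+1) * Aw m k) k
        - (fun k => match k with
          | 0 => (0:ℤ)
          | k+1 => Aw i k * Aw m (k+1) - Aw i (k+1) * Aw m k) (k+1) := by
    intro k
    match k with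
    | 0 => simp only; rw [Aw_rec0, Aw_rec0]; ring
    | k+1 => simp only; rw [Aw_recS, Aw_recS]; ring
  have tele := Finset.sum_range_sub' (fun k => match k with
          | 0 => (0:ℤ)
          | k+1 => Aw i k * Aw m (k+1) - Aw i (k+1) * Aw m k) N
  have : ∑ k ∈ Finset.range N, (Aw (i+1) k * Aw m k - Aw i k * Aw (m+1) k) = 0 := by
    rw [Finset.sum_congr rfl (fun k _ => key k), tele]
    obtain ⟨N', rfl⟩ : ∃ N', N = N' + 1 := ⟨N - 1, by omega⟩
    simp only
    rw [Aw_eq_zero (show i < N' by omega), Aw_eq_zero (show i < N'+1 by omega)]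
    ring
  rw [Finset.sum_sub_distrib] at this
  linarith

lemma Aw_inner (i : ℕ) : ∀ m N, i + m + 2 ≤ N →
    ∑ k ∈ Finset.range N, Aw i k * Aw m k = Aw (i + m) 0 := by
  induction i with
  | zero =>
    intro m N h
    obtain ⟨N', rfl⟩ : ∃ N', N = N' + 1 := ⟨N - 1, by omega⟩
    rw [Finset.sum_range_succ' (fun k => Aw 0 k * Aw m k) N']
    rw [Finset.sum_eq_zero (fun k _ => by rw [Aw_eq_zero (show 0 < k+1 by omega)]; ring)]
    rw [Aw_diag 0]
    simp
  | succ i ih =>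
    intro m N h
    rw [Aw_inner_shift N i m (by omega), ih (m+1) N (by omega),
      show i + (m+1) = i + 1 + m by omega]

noncomputable section

/-- tridiagonal matrix: diagonal `1` except top-left entry `a`, off-diagonals `1` -/
def Tmat (a : ℤ) (n : ℕ) : Matrix (Fin n) (Fin n) ℤ :=
  Matrix.of fun i j =>
    (if (i:ℕ) = (j:ℕ) then (if (j:ℕ) = 0 then a else 1) else 0)
    + (if (i:ℕ) = (j:ℕ)+1 then 1 else 0) + (if (i:ℕ)+1 = (j:ℕ) then 1 else 0)

def eseq : ℕ → ℤ
  | 0 => 1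
  | 1 => 1
  | n+2 => eseq (n+1) - eseq n

lemma detT (a : ℤ) (n : ℕ) :
    (Tmat a (n+2)).det = a * (Tmat 1 (n+1)).det - (Tmat 1 n).det := by
  rw [Matrix.det_succ_row_zero, Fin.sum_univ_succ, Fin.sum_univ_succ]
  simp only [Fin.succ_zero_eq_one]
  have hrest : ∑ j : Fin n, ((-1:ℤ))^(((j.succ.succ : Fin (n+2))):ℕ)
      * (Tmat a (n+2)) 0 j.succ.succ
      * ((Tmat a (n+2)).submatrix Fin.succ (j.succ.succ).succAbove).det = 0 := by
    refine Finset.sum_eq_zero fun j _ => ?_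
    have : (Tmat a (n+2)) 0 j.succ.succ = 0 := by
      simp only [Tmat, Matrix.of_apply, Fin.val_zero, Fin.val_succ]
      split_ifs <;> first | contradiction | omega
    rw [this]; ring
  rw [hrest]
  have h00 : (Tmat a (n+2)) 0 0 = a := by
    simp only [Tmat, Matrix.of_apply, Fin.val_zero]
    norm_num
  have h01 : (Tmat a (n+2)) 0 1 = 1 := by
    simp only [Tmat, Matrix.of_apply, Fin.val_zero, Fin.val_one]
    norm_num
  have hsub0 : (Tmat a (n+2)).submatrix Fin.succ (0 : Fin (n+2)).succAbove
      = Tmat 1 (n+1) := by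
    ext i j
    simp only [Matrix.submatrix_apply, Fin.zero_succAbove, Tmat, Matrix.of_apply, Fin.val_succ]
    split_ifs <;> first | contradiction | rfl | omega
  have hsub1 : ((Tmat a (n+2)).submatrix Fin.succ (1 : Fin (n+2)).succAbove).det
      = (Tmat 1 n).det := by
    rw [Matrix.det_succ_column_zero, Fin.sum_univ_succ]
    have e00 : ((Tmat a (n+2)).submatrix Fin.succ (1 : Fin (n+2)).succAbove) 0 0 = 1 := by
      simp only [Matrix.submatrix_apply, Fin.one_succAbove_zero, Tmat, Matrix.of_apply,
        Fin.val_succ, Fin.val_zero]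
      norm_num
    have erest : ∑ i : Fin n, ((-1:ℤ))^(((i.succ : Fin (n+1))):ℕ)
        * ((Tmat a (n+2)).submatrix Fin.succ (1 : Fin (n+2)).succAbove) i.succ 0
        * (((Tmat a (n+2)).submatrix Fin.succ (1 : Fin (n+2)).succAbove).submatrix
            i.succ.succAbove Fin.succ).det = 0 := by
      refine Finset.sum_eq_zero fun i _ => ?_
      have : ((Tmat a (n+2)).submatrix Fin.succ (1 : Fin (n+2)).succAbove) i.succ 0 = 0 := by
        simp only [Matrix.submatrix_apply, Fin.one_succAbove_zero, Tmat, Matrix.of_apply,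
          Fin.val_succ, Fin.val_zero]
        split_ifs <;> first | contradiction | omega
      rw [this]; ring
    rw [erest, e00]
    have hinner : ((Tmat a (n+2)).submatrix Fin.succ (1 : Fin (n+2)).succAbove).submatrix
        (0 : Fin (n+1)).succAbove Fin.succ = Tmat 1 n := by
      ext i j
      simp only [Matrix.submatrix_apply, Fin.zero_succAbove, Fin.one_succAbove_succ,
        Tmat, Matrix.of_apply, Fin.val_succ]
      split_ifs <;> first | contradiction | rfl | omega
    rw [hinner]
    simp
  rw [h00, h01, hsub0, hsub1]
  simp
  ring

lemma eseq_succ_succ (n : ℕ) : eseq (n+2) = eseq (n+1) - eseq n := rfl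

lemma eseq0 : eseq 0 = 1 := rfl
lemma eseq1 : eseq 1 = 1 := rfl
lemma eseq2 : eseq 2 = 0 := by rw [show (2:ℕ) = 0+2 from rfl, eseq_succ_succ]; norm_num [eseq0, eseq1]
lemma eseq3 : eseq 3 = -1 := by rw [show (3:ℕ) = 1+2 from rfl, eseq_succ_succ]; norm_num [eseq1, eseq2]
lemma eseq4 : eseq 4 = -1 := by rw [show (4:ℕ) = 2+2 from rfl, eseq_succ_succ]; norm_num [eseq2, eseq3]
lemma eseq5 : eseq 5 = 0 := by rw [show (5:ℕ) = 3+2 from rfl, eseq_succ_succ]; norm_num [eseq3, eseq4]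

lemma detE : ∀ n, (Tmat 1 n).det = eseq n := by
  intro n
  induction n using Nat.strong_induction_on with
  | _ n ih =>
    match n with
    | 0 => simp [Matrix.det_fin_zero, eseq0]
    | 1 => simp [Matrix.det_fin_one, Tmat, eseq1]
    | n+2 =>
      rw [detT, ih (n+1) (by omega), ih n (by omega), eseq_succ_succ]
      ring

lemma eseq_period : ∀ n, eseq (n+6) = eseq n := by
  intro n
  induction n using Nat.strong_induction_on with
  | _ n ih =>
    match n with
    | 0 => rw [show (0:ℕ)+6 = 4+2 from rfl, eseq_succ_succ]; norm_num [eseq4, eseq5, eseq0]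
    | 1 => rw [show (1:ℕ)+6 = 5+2 from rfl, eseq_succ_succ]
           rw [show (5:ℕ)+1 = 0+6 from rfl, ih 0 (by omega), eseq5, eseq0, eseq1]; ring
    | n+2 =>
      rw [show n+2+6 = (n+6)+2 by omega, eseq_succ_succ, show n+6+1 = (n+1)+6 by omega,
        ih (n+1) (by omega), ih n (by omega), eseq_succ_succ]

lemma eseq_mod (n : ℕ) : eseq n = eseq (n % 6) := by
  induction n using Nat.strong_induction_on with
  | _ n ih =>
    by_cases h : n < 6
    · rw [Nat.mod_eq_of_lt h]
    · obtain ⟨m, rfl⟩ : ∃ m, n = m + 6 := ⟨n - 6, by omega⟩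
      rw [eseq_period, ih m (by omega), Nat.add_mod_right]

lemma detK (n : ℕ) : (Tmat 2 (n+1)).det = 2 * eseq (n+6) - eseq (n+5) := by
  match n with
  | 0 => rw [show (0:ℕ)+6 = 0+6 from rfl, eseq_period, show (0:ℕ)+5 = 5 from rfl, eseq0, eseq5]
         simp [Matrix.det_fin_one, Tmat]
  | n+1 =>
    rw [detT, detE, detE, show n+1+6 = (n+1)+6 from rfl, eseq_period,
      show n+1+5 = n+6 from rfl, eseq_period]

lemma detK_formula (n : ℕ) : (Tmat 2 (n+1)).det
    = if (n+1) % 3 = 1 then 2 * (-1:ℤ) ^ ((n+1) / 3) else (-1:ℤ) ^ ((n+1) / 3) := by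
  rw [detK, eseq_mod (n+6), eseq_mod (n+5)]
  obtain ⟨q, r, hr, rfl⟩ : ∃ q r, r < 6 ∧ n = 6*q + r :=
    ⟨6 / 6 * 0 + n / 6, n % 6, Nat.mod_lt _ (by omega), by omega⟩
  have hpow : ∀ c : ℕ, (-1:ℤ) ^ (2*q + c) = (-1:ℤ)^c := fun c => by
    rw [pow_add, pow_mul]; norm_num
  interval_cases r
  · rw [show (6*q+0+6) % 6 = 0 by omega, show (6*q+0+5) % 6 = 5 by omega,
      show (6*q+0+1) % 3 = 1 by omega, show (6*q+0+1)/3 = 2*q + 0 by omega, hpow]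
    norm_num [eseq0, eseq5]
  · rw [show (6*q+1+6) % 6 = 1 by omega, show (6*q+1+5) % 6 = 0 by omega,
      show (6*q+1+1) % 3 = 2 by omega, show (6*q+1+1)/3 = 2*q + 0 by omega, hpow]
    norm_num [eseq1, eseq0]
  · rw [show (6*q+2+6) % 6 = 2 by omega, show (6*q+2+5) % 6 = 1 by omega,
      show (6*q+2+1) % 3 = 0 by omega, show (6*q+2+1)/3 = 2*q + 1 by omega, hpow]
    norm_num [eseq2, eseq1]
  · rw [show (6*q+3+6) % 6 = 3 by omega, show (6*q+3+5) % 6 = 2 by omega,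
      show (6*q+3+1) % 3 = 1 by omega, show (6*q+3+1)/3 = 2*q + 1 by omega, hpow]
    norm_num [eseq3, eseq2]
  · rw [show (6*q+4+6) % 6 = 4 by omega, show (6*q+4+5) % 6 = 3 by omega,
      show (6*q+4+1) % 3 = 2 by omega, show (6*q+4+1)/3 = 2*q + 1 by omega, hpow]
    norm_num [eseq4, eseq3]
  · rw [show (6*q+5+6) % 6 = 5 by omega, show (6*q+5+5) % 6 = 4 by omega,
      show (6*q+5+1) % 3 = 0 by omega, show (6*q+5+1)/3 = 2*q + 2 by omega, hpow]
    norm_num [eseq5, eseq4]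

end

 open Finset Matrix
lemma mp_eq_Aw (m : ℕ) : (motzkinPrefix m : ℤ) = Aw m 0 := by
  rw [motzkinPrefix_eq_sum, Aw]
  push_cast
  refine Finset.sum_congr rfl fun l _ => ?_
  rw [cnt_eq_pcount, Nat.zero_add]

lemma Aw_sum_extend (i : ℕ) (c : ℕ → ℤ) {M N : ℕ} (h1 : i < M) (h2 : M ≤ N) :
    ∑ k ∈ Finset.range N, Aw i k * c k = ∑ k ∈ Finset.range M, Aw i k * c k := by
  refine (Finset.sum_subset (Finset.range_subset_range.2 h2) fun k hk hk2 => ?_).symm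
  rw [Aw_eq_zero (show i < k by simp only [Finset.mem_range] at hk hk2; omega), zero_mul]

section main
variable (n : ℕ)

noncomputable def Amat : Matrix (Fin n) (Fin n) ℤ := Matrix.of fun i k => Aw (i:ℕ) (k:ℕ)
noncomputable def Cmat : Matrix (Fin n) (Fin n) ℤ := Matrix.of fun j k => Aw ((j:ℕ)+1) (k:ℕ)

lemma hankel_factor :
    (Matrix.of fun i j : Fin n => (motzkinPrefix (i.1 + j.1 + 1) : ℤ))
      = Amat n * (Cmat n)ᵀ := by
  ext i j
  rw [Matrix.mul_apply, Matrix.of_apply]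
  simp only [Amat, Cmat, Matrix.transpose_apply, Matrix.of_apply]
  rw [show (∑ k : Fin n, Aw (i:ℕ) (k:ℕ) * Aw ((j:ℕ)+1) (k:ℕ))
      = ∑ k ∈ Finset.range n, Aw (i:ℕ) k * Aw ((j:ℕ)+1) k from
    Fin.sum_univ_eq_sum_range (fun k => Aw (i:ℕ) k * Aw ((j:ℕ)+1) k) n]
  rw [← Aw_sum_extend (i:ℕ) (fun k => Aw ((j:ℕ)+1) k) (M := n) (N := n + ((i:ℕ)+(j:ℕ)+3))
    i.isLt (by omega)]
  rw [Aw_inner (i:ℕ) ((j:ℕ)+1) (n + ((i:ℕ)+(j:ℕ)+3)) (by omega)]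
  rw [mp_eq_Aw]
  rfl

lemma cmat_factor : Cmat n = Amat n * Tmat 2 n := by
  ext j k
  rw [Matrix.mul_apply]
  simp only [Amat, Cmat, Tmat, Matrix.of_apply]
  have hconv : (∑ l : Fin n, Aw (j:ℕ) (l:ℕ) *
      ((if (l:ℕ) = (k:ℕ) then (if (k:ℕ) = 0 then (2:ℤ) else 1) else 0)
      + (if (l:ℕ) = (k:ℕ)+1 then 1 else 0) + (if (l:ℕ)+1 = (k:ℕ) then 1 else 0)))
      = ∑ l ∈ Finset.range n, Aw (j:ℕ) l *
      ((if l = (k:ℕ) then (if (k:ℕ) = 0 then (2:ℤ) else 1) else 0)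
      + (if l = (k:ℕ)+1 then 1 else 0) + (if l+1 = (k:ℕ) then 1 else 0)) :=
    Fin.sum_univ_eq_sum_range (fun l => Aw (j:ℕ) l *
      ((if l = (k:ℕ) then (if (k:ℕ) = 0 then (2:ℤ) else 1) else 0)
      + (if l = (k:ℕ)+1 then 1 else 0) + (if l+1 = (k:ℕ) then 1 else 0))) n
  rw [hconv, ← Aw_sum_extend (j:ℕ) (fun l =>
      ((if l = (k:ℕ) then (if (k:ℕ) = 0 then (2:ℤ) else 1) else 0)
      + (if l = (k:ℕ)+1 then 1 else 0) + (if l+1 = (k:ℕ) then 1 else 0)))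
    (M := n) (N := n+2) j.isLt (by omega)]
  have split : ∀ l, Aw (j:ℕ) l *
      ((if l = (k:ℕ) then (if (k:ℕ) = 0 then (2:ℤ) else 1) else 0)
      + (if l = (k:ℕ)+1 then 1 else 0) + (if l+1 = (k:ℕ) then 1 else 0))
      = (if l = (k:ℕ) then Aw (j:ℕ) l * (if (k:ℕ) = 0 then (2:ℤ) else 1) else 0)
      + (if l = (k:ℕ)+1 then Aw (j:ℕ) l else 0)
      + (if l+1 = (k:ℕ) then Aw (j:ℕ) l else 0) := by
    intro l
    split_ifs <;> ring
  rw [Finset.sum_congr rfl fun l _ => split l]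
  rw [Finset.sum_add_distrib, Finset.sum_add_distrib]
  rw [Finset.sum_ite_eq' (Finset.range (n+2)) (k:ℕ)
    (fun l => Aw (j:ℕ) l * (if (k:ℕ) = 0 then (2:ℤ) else 1))]
  rw [Finset.sum_ite_eq' (Finset.range (n+2)) ((k:ℕ)+1) (fun l => Aw (j:ℕ) l)]
  rw [if_pos (Finset.mem_range.2 (by have := k.isLt; omega : (k:ℕ) < n+2)),
    if_pos (Finset.mem_range.2 (by have := k.isLt; omega : (k:ℕ)+1 < n+2))]
  obtain hk | ⟨k', hk⟩ : (k:ℕ) = 0 ∨ ∃ k', (k:ℕ) = k'+1 := by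
    rcases Nat.eq_zero_or_pos (k:ℕ) with h | h
    · exact Or.inl h
    · exact Or.inr ⟨(k:ℕ)-1, by omega⟩
  · rw [hk]
    rw [Finset.sum_eq_zero (fun l _ => by rw [if_neg (by omega)])]
    rw [Aw_rec0]
    norm_num
    try ring
  · rw [hk]
    have hcond : ∀ l : ℕ, (if l+1 = k'+1 then Aw (j:ℕ) l else 0)
        = (if l = k' then Aw (j:ℕ) l else 0) := fun l => by
      simp only [Nat.add_right_cancel_iff]
    rw [Finset.sum_congr rfl fun l _ => hcond l]
    rw [Finset.sum_ite_eq' (Finset.range (n+2)) k' (fun l => Aw (j:ℕ) l)]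
    rw [if_pos (Finset.mem_range.2 (by have := k.isLt; omega : k' < n+2))]
    rw [if_neg (by omega : ¬ k'+1 = 0)]
    rw [Aw_recS]
    ring
end main

theorem motzkinPrefix_hankel_det_shift (n : ℕ) (hn : 0 < n) :
    (Matrix.of fun i j : Fin n => (motzkinPrefix (i.1 + j.1 + 1) : ℤ)).det =
      if n % 3 = 1 then 2 * (-1) ^ (n / 3) else (-1) ^ (n / 3) := by
  have hAdet : (Amat n).det = 1 := by
    rw [Matrix.det_of_lowerTriangular (Amat n) (fun i j hij => by
      simp only [Amat, Matrix.of_apply]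
      exact Aw_eq_zero (by exact_mod_cast hij))]
    · refine Finset.prod_eq_one fun i _ => ?_
      simp only [Amat, Matrix.of_apply]
      exact Aw_diag _
  rw [hankel_factor, Matrix.det_mul, Matrix.det_transpose, cmat_factor, Matrix.det_mul,
    hAdet]
  obtain ⟨n', rfl⟩ : ∃ n', n = n' + 1 := ⟨n - 1, by omega⟩
  rw [one_mul, one_mul, detK_formula n']
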